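/- arXiv:2101.05033 — 2 statements merged into one kernel-verified Lean document; each statement's English description precedes it below -/
import Mathlib

section
/- If a deleted edge e = (u,v) satisfies λ(G−e, u, v) ≥ λ(G), then the global minimum cut value is unchanged: λ(G−e) = λ(G). -/
open Finset

/-- Weight of the cut `(A, V \ A)`. -/
def cutWeight {V : Type*} [Fintype V] [DecidableEq V] (w : V → V → ℝ) (A : Finset V) : ℝ :=
  ∑ u ∈ A, ∑ v ∈ Aᶜ, w u v

/-- Value of the global minimum cut. -/
noncomputable def minCutVal {V : Type*} [Fintype V] [DecidableEq V] (w : V → V → ℝ) : ℝ :=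
  sInf {x | ∃ A : Finset V, A.Nonempty ∧ A ≠ Finset.univ ∧ cutWeight w A = x}

/-- Value of a minimum `s`-`t` cut. -/
noncomputable def minSTCutVal {V : Type*} [Fintype V] [DecidableEq V]
    (w : V → V → ℝ) (s t : V) : ℝ :=
  sInf {x | ∃ A : Finset V, s ∈ A ∧ t ∉ A ∧ cutWeight w A = x}

/-- Deletion of the undirected edge `(u,v)`. -/
def delEdge {V : Type*} [DecidableEq V] (w : V → V → ℝ) (u v : V) : V → V → ℝ :=
  fun x y => if (x = u ∧ y = v) ∨ (x = v ∧ y = u) then 0 else w x y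

section aux
variable {V : Type*} [Fintype V] [DecidableEq V]

lemma global_set_finite (w : V → V → ℝ) :
    {x | ∃ A : Finset V, A.Nonempty ∧ A ≠ Finset.univ ∧ cutWeight w A = x}.Finite := by
  apply (Set.finite_range (cutWeight w)).subset
  rintro x ⟨A, _, _, rfl⟩
  exact ⟨A, rfl⟩

lemma st_set_finite (w : V → V → ℝ) (s t : V) :
    {x | ∃ A : Finset V, s ∈ A ∧ t ∉ A ∧ cutWeight w A = x}.Finite := by
  apply (Set.finite_range (cutWeight w)).subset
  rintro x ⟨A, _, _, rfl⟩
  exact ⟨A, rfl⟩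

lemma cutWeight_compl (w : V → V → ℝ) (hsymm : ∀ x y, w x y = w y x) (A : Finset V) :
    cutWeight w Aᶜ = cutWeight w A := by
  unfold cutWeight
  rw [compl_compl, Finset.sum_comm]
  exact Finset.sum_congr rfl fun x _ => Finset.sum_congr rfl fun y _ => hsymm y x

end aux

/-- If a deleted edge `e = (u,v)` satisfies `λ(G-e, u, v) ≥ λ(G)`, then the global
minimum cut value is unchanged: `λ(G-e) = λ(G)`. -/
theorem delete_edge_min_cut_unchanged {V : Type*} [Fintype V] [DecidableEq V]
    (w : V → V → ℝ) (hnn : ∀ x y, 0 ≤ w x y) (hsymm : ∀ x y, w x y = w y x)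
    (u v : V) (huv : u ≠ v) (hedge : 0 < w u v) (hcard : 2 ≤ Fintype.card V)
    (hge : minCutVal w ≤ minSTCutVal (delEdge w u v) u v) :
    minCutVal (delEdge w u v) = minCutVal w := by
  set w' := delEdge w u v with hw'
  have hw'symm : ∀ x y, w' x y = w' y x := by
    intro x y
    simp only [hw', delEdge]
    split_ifs <;> first | rfl | exact hsymm x y | tauto
  have hwle : ∀ x y, w' x y ≤ w x y := by
    intro x y
    simp only [hw', delEdge]
    split_ifs with h
    · exact hnn x y
    · exact le_rfl
  -- the sets
  set Sw := {x | ∃ A : Finset V, A.Nonempty ∧ A ≠ Finset.univ ∧ cutWeight w A = x} with hSw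
  set Sw' := {x | ∃ A : Finset V, A.Nonempty ∧ A ≠ Finset.univ ∧ cutWeight w' A = x} with hSw'
  have hSwne : Sw.Nonempty := by
    refine ⟨cutWeight w {u}, {u}, Finset.singleton_nonempty u, ?_, rfl⟩
    intro h
    have : v ∈ ({u} : Finset V) := h ▸ Finset.mem_univ v
    exact huv (Finset.mem_singleton.mp this).symm
  have hSw'ne : Sw'.Nonempty := by
    refine ⟨cutWeight w' {u}, {u}, Finset.singleton_nonempty u, ?_, rfl⟩
    intro h
    have : v ∈ ({u} : Finset V) := h ▸ Finset.mem_univ v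
    exact huv (Finset.mem_singleton.mp this).symm
  have hSwfin := global_set_finite w
  have hSw'fin := global_set_finite w'
  apply le_antisymm
  · -- λ(G-e) ≤ λ(G)
    obtain ⟨A, hAne, hAuniv, hA⟩ := hSwne.csInf_mem hSwfin
    calc minCutVal w' ≤ cutWeight w' A := by
          exact csInf_le hSw'fin.bddBelow ⟨A, hAne, hAuniv, rfl⟩
      _ ≤ cutWeight w A :=
          Finset.sum_le_sum fun x _ => Finset.sum_le_sum fun y _ => hwle x y
      _ = minCutVal w := hA
  · -- λ(G) ≤ λ(G-e)
    obtain ⟨A, hAne, hAuniv, hA⟩ := hSw'ne.csInf_mem hSw'fin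
    rw [show minCutVal w' = sInf Sw' from rfl, ← hA]
    by_cases hu : u ∈ A <;> by_cases hv : v ∈ A
    · -- both in A : cut unchanged
      have heq : cutWeight w' A = cutWeight w A := by
        apply Finset.sum_congr rfl
        intro x hx
        apply Finset.sum_congr rfl
        intro y hy
        simp only [hw', delEdge]
        rw [if_neg]
        rintro (⟨rfl, rfl⟩ | ⟨rfl, rfl⟩)
        · exact (Finset.mem_compl.mp hy) hv
        · exact (Finset.mem_compl.mp hy) hu
      rw [heq]
      exact csInf_le hSwfin.bddBelow ⟨A, hAne, hAuniv, rfl⟩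
    · -- u ∈ A, v ∉ A : st-cut
      calc minCutVal w ≤ minSTCutVal w' u v := hge
        _ ≤ cutWeight w' A :=
            csInf_le (st_set_finite w' u v).bddBelow ⟨A, hu, hv, rfl⟩
    · -- v ∈ A, u ∉ A : use complement
      rw [← cutWeight_compl w' hw'symm A]
      calc minCutVal w ≤ minSTCutVal w' u v := hge
        _ ≤ cutWeight w' Aᶜ :=
            csInf_le (st_set_finite w' u v).bddBelow
              ⟨Aᶜ, Finset.mem_compl.mpr hu, fun h => (Finset.mem_compl.mp h) hv, rfl⟩
    · -- neither in A : cut unchanged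
      have heq : cutWeight w' A = cutWeight w A := by
        apply Finset.sum_congr rfl
        intro x hx
        apply Finset.sum_congr rfl
        intro y hy
        simp only [hw', delEdge]
        rw [if_neg]
        rintro (⟨rfl, rfl⟩ | ⟨rfl, rfl⟩)
        · exact hu hx
        · exact hv hx
      rw [heq]
      exact csInf_le hSwfin.bddBelow ⟨A, hAne, hAuniv, rfl⟩
end

section
/- The vertex labeling produced by local relabeling with depth γ is a valid labeling for the initial preflow of the push-relabel algorithm: for every residual edge (x,y), d(x) ≤ d(y) + 1. -/
open scoped Classical

/-!
Capping the BFS distance to `t` at `γ + 1` keeps the property that it drops by at most one along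
an edge, and every label other than `d s` is at most `γ + 1 ≤ n`.
-/

/-- The undirected graph underlying a symmetric capacity function: `x` and `y`
are adjacent iff they are distinct and the edge `(x,y)` has positive capacity. -/
def netGraph {V : Type*} (c : V → V → ℝ) (hsymm : ∀ x y, c x y = c y x) : SimpleGraph V where
  Adj x y := x ≠ y ∧ 0 < c x y
  symm := by
    constructor
    intro x y h
    exact ⟨h.1.symm, by rw [← hsymm x y]; exact h.2⟩
  loopless := ⟨fun x h => h.1 rfl⟩

namespace SimpleGraph

variable {V : Type*} (G : SimpleGraph V) [DecidableRel G.Reachable]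

noncomputable def truncatedDist (t : V) (k : ℕ) (x : V) : ℕ :=
  if G.Reachable x t then min (G.dist x t) k else k

variable {G}

theorem truncatedDist_le (t : V) (k : ℕ) (x : V) : G.truncatedDist t k x ≤ k := by
  unfold truncatedDist
  split_ifs
  exacts [min_le_right _ _, le_rfl]

theorem Adj.truncatedDist_le_add_one {x y : V} (hadj : G.Adj x y) (t : V) (k : ℕ) :
    G.truncatedDist t k x ≤ G.truncatedDist t k y + 1 := by
  by_cases hy : G.Reachable y t
  · have hdist : G.dist x t ≤ G.dist x y + G.dist y t := hy.dist_triangle_right x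
    rw [dist_eq_one_iff_adj.mpr hadj] at hdist
    simp only [truncatedDist, if_pos hy, if_pos (hadj.reachable.trans hy)]
    omega
  · calc G.truncatedDist t k x ≤ k := truncatedDist_le t k x
      _ ≤ G.truncatedDist t k y + 1 := by simp [truncatedDist, if_neg hy]

end SimpleGraph

/-- The initial preflow saturates exactly the edges leaving `s`, so the residual edges are the
edges `(x,y)` with `x ≠ s` and `c x y > 0` together with the reverse edges `(x,s)` with
`c s x > 0`. -/
theorem local_relabeling_valid_general {V : Type*} [Fintype V] [DecidableEq V]
    (c : V → V → ℝ) (hsymm : ∀ x y, c x y = c y x)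
    (s t : V) (γ : ℕ) (hγ : γ < Fintype.card V)
    (d : V → ℕ) (hds : d s = Fintype.card V)
    (hd : ∀ x, x ≠ s →
      d x = if (netGraph c hsymm).Reachable x t
            then min ((netGraph c hsymm).dist x t) (γ + 1) else γ + 1) :
    (∀ x y, x ≠ s → 0 < c x y → d x ≤ d y + 1) ∧
    (∀ x, 0 < c s x → d x ≤ d s + 1) := by
  have hd' : ∀ x, x ≠ s → d x = (netGraph c hsymm).truncatedDist t (γ + 1) x := hd
  have le_source_add_one : ∀ x, d x ≤ d s + 1 := fun x => by
    rcases eq_or_ne x s with rfl | hx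
    · exact Nat.le_succ _
    · have := SimpleGraph.truncatedDist_le (G := netGraph c hsymm) t (γ + 1) x
      rw [hd' x hx]
      omega
  refine ⟨fun x y hx hcxy => ?_, fun x _ => le_source_add_one x⟩
  rcases eq_or_ne y s with rfl | hy
  · exact le_source_add_one x
  rcases eq_or_ne x y with rfl | hxy
  · exact Nat.le_succ _
  have hadj : (netGraph c hsymm).Adj x y := ⟨hxy, hcxy⟩
  rw [hd' x hx, hd' y hy]
  exact hadj.truncatedDist_le_add_one t (γ + 1)

/-- The vertex labeling produced by local relabeling with depth `γ` is a valid labeling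
for the initial preflow of the push-relabel algorithm: `d(t) = 0`, `d(s) = n`, every
vertex at BFS distance at most `γ` from the sink is labeled with its distance and all
other non-source vertices with `γ + 1`.  The initial preflow saturates exactly the edges
leaving `s`, so the residual edges are the edges `(x,y)` with `x ≠ s` and `c x y > 0`
together with the reverse edges `(x,s)` with `c s x > 0`; for each residual edge `(x,y)`
we have `d x ≤ d y + 1`. -/
theorem local_relabeling_valid {V : Type*} [Fintype V] [DecidableEq V]
    (c : V → V → ℝ) (hsymm : ∀ x y, c x y = c y x) (hnn : ∀ x y, 0 ≤ c x y)
    (s t : V) (hst : s ≠ t) (γ : ℕ) (hγ : γ < Fintype.card V)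
    (d : V → ℕ) (hds : d s = Fintype.card V)
    (hd : ∀ x, x ≠ s →
      d x = if (netGraph c hsymm).Reachable x t
            then min ((netGraph c hsymm).dist x t) (γ + 1) else γ + 1) :
    (∀ x y, x ≠ s → 0 < c x y → d x ≤ d y + 1) ∧
    (∀ x, 0 < c s x → d x ≤ d s + 1) :=
  local_relabeling_valid_general c hsymm s t γ hγ d hds hd
end
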